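/- Let R be a commutative \mathbb{Q}-algebra and let (a_n)_{n\ge 1}, (b_n)_{n\ge 1}, (c_n)_{n\ge 1}, (d_n)_{n\ge 1} be sequences in R. Set A = 1 + \sum_{n\ge 1} a_n Q^n, B = 1 + \sum_{n\ge 1} b_n Q^n, C = 1 + \sum_{n\ge 1} c_n Q^n, D = 1 + \sum_{n\ge 1} d_n Q^n in R[[Q]]. Then the identity log C = log A + log B - log D holds in R[[Q]] if and only if for every n \ge 1 one has c_n = \sum_{l=1}^{n+1} (-1)^{l-1} \sum_{((i_1,j_1),\dots,(i_l,j_l)) \in S_l(n)} a_{i_l}\, d_{i_1-i_2}\, d_{i_2-i_3} \cdots d_{i_{l-1}-i_l}\, b_{j_1}, where by convention a_0 = b_0 = 1. -/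

import Mathlib

/-!
Logarithmic differentiation: `log (1 + f)` is the unique series with zero constant term whose
derivative times `1 + f` is `f'`. Hence `log` turns products of series with constant term `1`
into sums and is injective on them, so the identity of logarithms says exactly `C * D = A * B`.
Writing `D = 1 + G`, the inverse of `D` is `∑ₗ (-G)ˡ`, and the coefficient of `Qⁿ` in
`A * Gˡ * B` is the inner sum over `S_{l+1}(n)`: the `l` factors `G` contribute the gaps
`i_k - i_{k+1} ≥ 1`, while `A` and `B` contribute `a_{i_{l+1}}` and `b_{j_1}`.
-/

open PowerSeries Finset

/-- The set `S_l(n)` of tuples `((i_1,j_1),...,(i_l,j_l))` of pairs of nonnegative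
integers with `i_1 > i_2 > ... > i_l` and `i_k + j_k = n` for all `k`. -/
def Sln (l n : ℕ) : Finset (Fin l → ℕ × ℕ) :=
  (Fintype.piFinset fun _ => Finset.range (n + 1) ×ˢ Finset.range (n + 1)).filter
    (fun f => (∀ k : Fin l, (f k).1 + (f k).2 = n) ∧
      ∀ k k' : Fin l, k < k' → (f k').1 < (f k).1)

/-- `∑_{l=1}^{n+1} (-1)^{l-1} ∑_{S_l(n)} a_{i_l} d_{i_1-i_2} ⋯ d_{i_{l-1}-i_l} b_{j_1}`. -/
def incExcSum {R : Type*} [CommRing R] (a b d : ℕ → R) (n : ℕ) : R :=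
  ∑ l ∈ Finset.range (n + 1), (-1 : R) ^ l *
    ∑ f ∈ Sln (l + 1) n,
      a (f (Fin.last l)).1 *
        (∏ k : Fin l, d ((f (Fin.castSucc k)).1 - (f (Fin.succ k)).1)) *
        b (f 0).2

/-- For `f ∈ R[[Q]]` with zero constant term over a `ℚ`-algebra `R`,
`log(1+f) = ∑_{m ≥ 1} (-1)^{m-1} f^m / m`; its `n`-th coefficient is the (finite) sum
`∑_{m=1}^{n} (-1)^{m-1}/m ⬝ coeff_n (f^m)`, since `coeff_n (f^m) = 0` for `m > n`. -/
noncomputable def logOnePlus {R : Type*} [CommRing R] [Algebra ℚ R]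
    (f : PowerSeries R) : PowerSeries R :=
  PowerSeries.mk fun n =>
    ∑ m ∈ Finset.range n, ((-1 : ℚ) ^ m / (m + 1)) • (PowerSeries.coeff n (f ^ (m + 1)))

section Log

lemma X_pow_dvd_derivative {R : Type*} [CommSemiring R] {g : R⟦X⟧} {N : ℕ}
    (h : X ^ (N + 1) ∣ g) : X ^ N ∣ d⁄dX R g := by
  rw [X_pow_dvd_iff] at h ⊢
  intro m hm
  rw [coeff_derivative, h (m + 1) (by omega), zero_mul]

variable {R : Type*} [CommRing R] [Algebra ℚ R]

noncomputable def logPartialSum (f : R⟦X⟧) (N : ℕ) : R⟦X⟧ :=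
  ∑ m ∈ range N, C (algebraMap ℚ R ((-1) ^ m / (m + 1))) * f ^ (m + 1)

lemma X_pow_dvd_logOnePlus_sub_logPartialSum {f : R⟦X⟧} (hf : constantCoeff f = 0) (N : ℕ) :
    X ^ (N + 1) ∣ logOnePlus f - logPartialSum f N := by
  have hpow (m n : ℕ) (h : n < m) : coeff n (f ^ m) = 0 :=
    X_pow_dvd_iff.1 (pow_dvd_pow_of_dvd (X_dvd_iff.2 hf) m) n h
  refine X_pow_dvd_iff.2 fun n hn => ?_
  rw [map_sub, sub_eq_zero, logOnePlus, coeff_mk, logPartialSum, map_sum,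
    ← sum_subset (range_subset_range.2 (Nat.le_of_lt_succ hn))]
  · exact sum_congr rfl fun m _ => by rw [coeff_C_mul, ← Algebra.smul_def]
  · intro m _ hm
    rw [mem_range, not_lt] at hm
    rw [coeff_C_mul, hpow (m + 1) n (by omega), mul_zero]

lemma derivative_logPartialSum (f : R⟦X⟧) (N : ℕ) :
    d⁄dX R (logPartialSum f N) = (∑ m ∈ range N, (-f) ^ m) * d⁄dX R f := by
  rw [logPartialSum, map_sum, sum_mul]
  refine sum_congr rfl fun m _ => ?_
  have hcoeff :
      C (algebraMap ℚ R ((-1) ^ m / (m + 1))) * ((m + 1 : ℕ) : R⟦X⟧) = (-1) ^ m := by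
    rw [← map_natCast (C.comp (algebraMap ℚ R)), RingHom.comp_apply, ← map_mul, ← map_mul,
      Nat.cast_succ, div_mul_cancel₀ _ (by positivity)]
    simp
  rw [Derivation.leibniz, derivative_C, smul_zero, add_zero, smul_eq_mul, derivative_pow,
    Nat.add_sub_cancel, neg_pow f, ← hcoeff]
  ring

lemma one_add_mul_derivative_logOnePlus {f : R⟦X⟧} (hf : constantCoeff f = 0) :
    (1 + f) * d⁄dX R (logOnePlus f) = d⁄dX R f := by
  refine sub_eq_zero.1 (PowerSeries.ext fun n => ?_)
  have hsplit : (1 + f) * d⁄dX R (logOnePlus f) - d⁄dX R f =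
      (1 + f) * d⁄dX R (logOnePlus f - logPartialSum f (n + 1))
        - (-f) ^ (n + 1) * d⁄dX R f := by
    rw [map_sub, derivative_logPartialSum]
    linear_combination d⁄dX R f * mul_neg_geom_sum (-f) (n + 1)
  have hdvd : X ^ (n + 1) ∣ (1 + f) * d⁄dX R (logOnePlus f) - d⁄dX R f := by
    rw [hsplit]
    exact dvd_sub (dvd_mul_of_dvd_right (X_pow_dvd_derivative
        (X_pow_dvd_logOnePlus_sub_logPartialSum hf (n + 1))) _)
      (dvd_mul_of_dvd_left (pow_dvd_pow_of_dvd (X_dvd_iff.2 (by simp [hf])) _) _)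
  rw [X_pow_dvd_iff.1 hdvd n n.lt_succ_self, map_zero]

lemma constantCoeff_logOnePlus (f : R⟦X⟧) : constantCoeff (logOnePlus f) = 0 := by
  simp [logOnePlus]

lemma mul_derivative_logOnePlus_sub_one {F : R⟦X⟧} (hF : constantCoeff F = 1) :
    F * d⁄dX R (logOnePlus (F - 1)) = d⁄dX R F := by
  have h := one_add_mul_derivative_logOnePlus (f := F - 1) (by rw [map_sub, hF, map_one, sub_self])
  rwa [add_sub_cancel, map_sub, derivative_one, sub_zero] at h

lemma logOnePlus_sub_one_eq_of_mul_derivative {F L : R⟦X⟧} (hF : constantCoeff F = 1)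
    (hL : constantCoeff L = 0) (h : F * d⁄dX R L = d⁄dX R F) : logOnePlus (F - 1) = L := by
  have := IsAddTorsionFree.of_module_rat R
  refine derivative.ext ((isUnit_iff_constantCoeff.2 (hF ▸ isUnit_one)).mul_left_cancel ?_)
    (by rw [constantCoeff_logOnePlus, hL])
  rw [mul_derivative_logOnePlus_sub_one hF, h]

lemma logOnePlus_mul_sub_one {F G : R⟦X⟧} (hF : constantCoeff F = 1)
    (hG : constantCoeff G = 1) :
    logOnePlus (F * G - 1) = logOnePlus (F - 1) + logOnePlus (G - 1) := by
  refine logOnePlus_sub_one_eq_of_mul_derivative (by simp [hF, hG])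
    (by simp [constantCoeff_logOnePlus]) ?_
  rw [map_add, Derivation.leibniz, smul_eq_mul, smul_eq_mul,
    ← mul_derivative_logOnePlus_sub_one hF, ← mul_derivative_logOnePlus_sub_one hG]
  ring

lemma eq_one_of_logOnePlus_sub_one_eq_zero {F : R⟦X⟧} (hF : constantCoeff F = 1)
    (h : logOnePlus (F - 1) = 0) : F = 1 := by
  have := IsAddTorsionFree.of_module_rat R
  refine derivative.ext ?_ (by rw [hF, map_one])
  rw [← mul_derivative_logOnePlus_sub_one hF, h, map_zero, mul_zero, derivative_one]

lemma logOnePlus_sub_one_inj {F G : R⟦X⟧} (hF : constantCoeff F = 1)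
    (hG : constantCoeff G = 1) :
    logOnePlus (F - 1) = logOnePlus (G - 1) ↔ F = G := by
  refine ⟨fun h => ?_, fun h => h ▸ rfl⟩
  obtain ⟨V, hV⟩ := (isUnit_iff_constantCoeff.2 (hG ▸ isUnit_one)).exists_right_inv
  have hFV : constantCoeff (F * V) = 1 := by
    simpa [hF, hG] using congrArg constantCoeff hV
  have hF_eq : F = G * (F * V) := by rw [mul_left_comm, hV, mul_one]
  rw [hF_eq, logOnePlus_mul_sub_one hG hFV, add_eq_left] at h
  rw [hF_eq, eq_one_of_logOnePlus_sub_one_eq_zero hFV h, mul_one]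

lemma logOnePlus_eq_add_sub_iff {F G H K : R⟦X⟧} (hF : constantCoeff F = 1)
    (hG : constantCoeff G = 1) (hH : constantCoeff H = 1) (hK : constantCoeff K = 1) :
    logOnePlus (H - 1) = logOnePlus (F - 1) + logOnePlus (G - 1) - logOnePlus (K - 1) ↔
      H * K = F * G := by
  rw [eq_sub_iff_add_eq, ← logOnePlus_mul_sub_one hH hK, ← logOnePlus_mul_sub_one hF hG,
    logOnePlus_sub_one_inj (by simp [hH, hK]) (by simp [hF, hG])]

end Log

section Chains

variable {R : Type*} [CommSemiring R]

def strictAntiSeqs (l n : ℕ) : Finset (Fin l → ℕ) :=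
  {i ∈ Fintype.piFinset fun _ => range (n + 1) | StrictAnti i}

lemma mem_strictAntiSeqs {l n : ℕ} {i : Fin l → ℕ} :
    i ∈ strictAntiSeqs l n ↔ StrictAnti i ∧ ∀ k, i k ≤ n := by
  simp only [strictAntiSeqs, mem_filter, Fintype.mem_piFinset, mem_range, Nat.lt_succ_iff]
  exact and_comm

lemma mem_strictAntiSeqs_succ {l n : ℕ} {i : Fin (l + 1) → ℕ} :
    i ∈ strictAntiSeqs (l + 1) n ↔ StrictAnti i ∧ i 0 ≤ n := by
  rw [mem_strictAntiSeqs]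
  exact and_congr_right fun hi =>
    ⟨fun h => h 0, fun h k => (hi.antitone (Fin.zero_le k)).trans h⟩

lemma mem_Sln {l n : ℕ} {f : Fin l → ℕ × ℕ} :
    f ∈ Sln l n ↔ (∀ k, (f k).1 + (f k).2 = n) ∧ StrictAnti fun k => (f k).1 := by
  simp only [Sln, mem_filter, Fintype.mem_piFinset, mem_product, mem_range]
  exact and_iff_right_of_imp fun h k => by have := h.1 k; omega

lemma sum_Sln {M : Type*} [AddCommMonoid M] (l n : ℕ) (F : (Fin l → ℕ × ℕ) → M) :
    ∑ f ∈ Sln l n, F f = ∑ i ∈ strictAntiSeqs l n, F fun k => (i k, n - i k) := by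
  have snd_eq {f : Fin l → ℕ × ℕ} (hf : f ∈ Sln l n) k : (f k).2 = n - (f k).1 := by
    have := (mem_Sln.1 hf).1 k; omega
  refine sum_nbij' (fun f k => (f k).1) (fun i k => (i k, n - i k)) (fun f hf => ?_)
    (fun i hi => ?_) (fun f hf => ?_) (fun i _ => rfl) (fun f hf => ?_)
  · have hf' := mem_Sln.1 hf
    exact mem_strictAntiSeqs.2 ⟨hf'.2, fun k => by have := hf'.1 k; omega⟩
  · have hi' := mem_strictAntiSeqs.1 hi
    exact mem_Sln.2 ⟨fun k => by have := hi'.2 k; simp only; omega, hi'.1⟩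
  · funext k; exact Prod.ext rfl (snd_eq hf k).symm
  · congr; funext k; exact Prod.ext rfl (snd_eq hf k)

def chainSum (a b d : ℕ → R) (l n : ℕ) : R :=
  ∑ i ∈ strictAntiSeqs (l + 1) n,
    a (i (Fin.last l)) * (∏ k : Fin l, d (i k.castSucc - i k.succ)) * b (n - i 0)

lemma chainSum_zero (a b d : ℕ → R) (n : ℕ) :
    chainSum a b d 0 n = ∑ m ∈ range (n + 1), a m * b (n - m) := by
  refine sum_nbij' (fun i => i 0) (fun m _ => m) (fun i hi => ?_) (fun m hm => ?_)
    (fun i _ => funext fun k => by rw [Fin.eq_zero (k : Fin 1)]) (fun _ _ => rfl) (fun i _ => ?_)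
  · exact mem_range.2 (Nat.lt_succ_of_le (mem_strictAntiSeqs_succ.1 hi).2)
  · exact mem_strictAntiSeqs_succ.2
      ⟨Subsingleton.strictAnti (α := Fin 1) _, Nat.le_of_lt_succ (mem_range.1 hm)⟩
  · simp

lemma chainSum_succ (a b d : ℕ → R) (l n : ℕ) :
    chainSum a b d (l + 1) n = ∑ j ∈ Icc 1 n, d j * chainSum a b d l (n - j) := by
  simp only [chainSum, mul_sum, sum_sigma']
  symm
  -- `j` is the first gap `i_0 - i_1`
  refine sum_nbij' (fun x => Fin.cons (x.2 0 + x.1) x.2) (fun i => ⟨i 0 - i 1, Fin.tail i⟩)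
    (fun x hx => ?_) (fun i hi => ?_) (fun x hx => ?_) (fun i hi => ?_) (fun x hx => ?_)
  · obtain ⟨j, i⟩ := x
    simp only [mem_sigma, mem_Icc, mem_strictAntiSeqs_succ] at hx ⊢
    exact ⟨strictAnti_vecCons.2 ⟨by omega, hx.2.1⟩, by simp only [Fin.cons_zero]; omega⟩
  · simp only [mem_sigma, mem_Icc, mem_strictAntiSeqs_succ] at hi ⊢
    have h01 : i 1 < i 0 := hi.1 Fin.zero_lt_one
    refine ⟨by omega, hi.1.comp_strictMono Fin.strictMono_succ, ?_⟩
    simp only [Fin.tail, Fin.succ_zero_eq_one]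
    omega
  · obtain ⟨j, i⟩ := x
    simp
  · have h01 : i 1 < i 0 := (mem_strictAntiSeqs_succ.1 hi).1 Fin.zero_lt_one
    conv_rhs => rw [← Fin.cons_self_tail i]
    simp only [Fin.tail, Fin.succ_zero_eq_one]
    congr 1
    omega
  · obtain ⟨j, i⟩ := x
    simp only [Fin.prod_univ_succ, Fin.cons_zero, Fin.castSucc_zero, ← Fin.succ_last,
      ← Fin.succ_castSucc, Fin.cons_succ, Nat.add_sub_cancel_left, Nat.sub_sub, add_comm j]
    ring

end Chains

section GeneratingFunction

variable {R : Type*} [CommRing R]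

lemma incExcSum_eq_sum_chainSum (a b d : ℕ → R) (n : ℕ) :
    incExcSum a b d n = ∑ l ∈ range (n + 1), (-1) ^ l * chainSum a b d l n := by
  simp only [incExcSum, chainSum, sum_Sln]

lemma coeff_mk_sub_C_mul (d : ℕ → R) (F : R⟦X⟧) (n : ℕ) :
    coeff n ((mk d - C (d 0)) * F) = ∑ j ∈ Icc 1 n, d j * coeff (n - j) F := by
  rw [coeff_mul,
    Nat.sum_antidiagonal_eq_sum_range_succ (fun i j => coeff i (mk d - C (d 0)) * coeff j F),
    range_eq_Ico, sum_eq_sum_Ico_succ_bot (Nat.succ_pos n)]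
  simp only [map_sub, coeff_mk, coeff_C, if_true, sub_self, zero_mul, zero_add]
  refine sum_congr (Ico_add_one_right_eq_Icc 1 n) fun j hj => ?_
  rw [mem_Icc] at hj
  rw [if_neg (by omega), sub_zero]

lemma chainSum_eq_coeff (a b d : ℕ → R) (l n : ℕ) :
    chainSum a b d l n = coeff n (mk a * (mk d - C (d 0)) ^ l * mk b) := by
  induction l generalizing n with
  | zero =>
    rw [chainSum_zero, pow_zero, mul_one, coeff_mul, Nat.sum_antidiagonal_eq_sum_range_succ_mk]
    simp only [coeff_mk]
  | succ l ih =>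
    rw [chainSum_succ, show mk a * (mk d - C (d 0)) ^ (l + 1) * mk b =
      (mk d - C (d 0)) * (mk a * (mk d - C (d 0)) ^ l * mk b) by ring, coeff_mk_sub_C_mul]
    simp only [ih]

lemma incExcSum_zero (a b d : ℕ → R) : incExcSum a b d 0 = a 0 * b 0 := by
  rw [incExcSum_eq_sum_chainSum, sum_range_one, chainSum_zero, sum_range_one]
  simp

lemma coeff_mul_geom_sum_eq_of_lt {G V : R⟦X⟧} (hG : constantCoeff G = 0) (hV : (1 + G) * V = 1)
    (F : R⟦X⟧) {n N : ℕ} (h : n < N) :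
    coeff n (F * ∑ l ∈ range N, (-G) ^ l) = coeff n (F * V) := by
  have hgeom := mul_neg_geom_sum (-G) N
  have hdiff : F * ∑ l ∈ range N, (-G) ^ l - F * V = -(F * V * (-G) ^ N) := by
    linear_combination (-(F * ∑ l ∈ range N, (-G) ^ l)) * hV + (F * V) * hgeom
  have hdvd : X ^ N ∣ F * ∑ l ∈ range N, (-G) ^ l - F * V := by
    rw [hdiff]
    exact (dvd_mul_of_dvd_right (pow_dvd_pow_of_dvd (X_dvd_iff.2 (by simp [hG])) N) _).neg_right
  exact sub_eq_zero.1 (by rw [← map_sub]; exact X_pow_dvd_iff.1 hdvd n h)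

lemma mk_incExcSum_mul (a b d : ℕ → R) :
    mk (incExcSum a b d) * (1 + (mk d - C (d 0))) = mk a * mk b := by
  set G := mk d - C (d 0)
  have hG : constantCoeff G = 0 := by
    rw [map_sub, constantCoeff_mk, constantCoeff_C, sub_self]
  obtain ⟨V, hV⟩ : ∃ V, (1 + G) * V = 1 :=
    (isUnit_iff_constantCoeff.2 (by simp [hG])).exists_right_inv
  suffices mk (incExcSum a b d) = mk a * mk b * V by
    rw [this, mul_assoc, mul_comm V, hV, mul_one]
  ext n
  rw [coeff_mk, incExcSum_eq_sum_chainSum,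
    ← coeff_mul_geom_sum_eq_of_lt hG hV _ (Nat.lt_succ_self n), mul_sum, map_sum]
  refine sum_congr rfl fun l _ => ?_
  rw [chainSum_eq_coeff, ← coeff_C_mul, neg_pow G, map_pow, map_neg, map_one]
  congr 1
  ring

end GeneratingFunction

theorem inclusion_exclusion_log {R : Type*} [CommRing R] [Algebra ℚ R]
    (a b c d : ℕ → R) (ha : a 0 = 1) (hb : b 0 = 1) (hc : c 0 = 1) (hd : d 0 = 1) :
    logOnePlus (PowerSeries.mk c - 1) =
        logOnePlus (PowerSeries.mk a - 1) + logOnePlus (PowerSeries.mk b - 1)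
          - logOnePlus (PowerSeries.mk d - 1) ↔
      ∀ n : ℕ, 1 ≤ n → c n = incExcSum a b d n := by
  have hmk {f : ℕ → R} (hf : f 0 = 1) : constantCoeff (mk f) = 1 := hf
  have hE := mk_incExcSum_mul a b d
  rw [hd, map_one, add_sub_cancel] at hE
  rw [logOnePlus_eq_add_sub_iff (hmk ha) (hmk hb) (hmk hc) (hmk hd), ← hE,
    (isUnit_iff_constantCoeff.2 (hmk hd ▸ isUnit_one)).mul_left_inj, PowerSeries.ext_iff]
  simp only [coeff_mk]
  refine ⟨fun h n _ => h n, fun h n => ?_⟩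
  rcases n with _ | n
  · rw [hc, incExcSum_zero, ha, hb, one_mul]
  · exact h _ n.succ_pos
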